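/- For φ ∈ C([0,∞);ℝ) with A_∞(φ) = ∞ and α > 0, the transform T_α(φ)(s) := φ(s) − log(1 + α A_s(φ)) satisfies A_s(T_α(φ)) = A_s(φ)/(1 + α A_s(φ)) for all s ≥ 0, and consequently A_∞(T_α(φ)) = 1/α. -/

import Mathlib

open MeasureTheory Real Filter

noncomputable def pathA (φ : ℝ → ℝ) (s : ℝ) : ℝ := ∫ u in (0:ℝ)..s, Real.exp (2 * φ u)

noncomputable def pathTalpha (α : ℝ) (φ : ℝ → ℝ) (s : ℝ) : ℝ :=
  φ s - Real.log (1 + α * pathA φ s)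

/-!
Since `A' = e^{2φ}` and `e^{2 T_α φ} = e^{2φ} / (1 + α A)^2 = (A / (1 + α A))'`, the identity
`A_s(T_α φ) = A_s(φ) / (1 + α A_s(φ))` is the fundamental theorem of calculus;
letting `A_s(φ) → ∞` gives the limit `1 / α`.
-/

theorem HasDerivAt.div_one_add_const_mul {F : ℝ → ℝ} {F' x : ℝ} (α : ℝ) (hF : HasDerivAt F F' x)
    (hx : 1 + α * F x ≠ 0) :
    HasDerivAt (fun t => F t / (1 + α * F t)) (F' / (1 + α * F x) ^ 2) x := by
  refine (hF.div ((hF.const_mul α).const_add 1) hx).congr_deriv ?_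
  ring

theorem tendsto_div_one_add_const_mul_atTop {α : ℝ} (hα : 0 < α) :
    Tendsto (fun x : ℝ => x / (1 + α * x)) atTop (nhds (1 / α)) := by
  have hinv : Tendsto (fun x : ℝ => (x⁻¹ + α)⁻¹) atTop (nhds (0 + α)⁻¹) :=
    (tendsto_inv_atTop_zero.add tendsto_const_nhds).inv₀ (by simpa using hα.ne')
  rw [zero_add, ← one_div] at hinv
  refine hinv.congr' ?_
  filter_upwards [eventually_gt_atTop (0 : ℝ)] with x hx
  have : 1 + α * x ≠ 0 := by positivity
  field_simp

section pathA

variable {φ : ℝ → ℝ}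

theorem hasDerivAt_pathA (hφ : Continuous φ) (s : ℝ) :
    HasDerivAt (pathA φ) (Real.exp (2 * φ s)) s := by
  have hexp : Continuous fun u => Real.exp (2 * φ u) := by fun_prop
  exact intervalIntegral.integral_hasDerivAt_right (hexp.intervalIntegrable _ _)
    (hexp.stronglyMeasurableAtFilter _ _) hexp.continuousAt

theorem continuous_pathA (hφ : Continuous φ) : Continuous (pathA φ) :=
  continuous_iff_continuousAt.mpr fun s => (hasDerivAt_pathA hφ s).continuousAt

theorem pathA_nonneg {s : ℝ} (hs : 0 ≤ s) : 0 ≤ pathA φ s :=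
  intervalIntegral.integral_nonneg hs fun _ _ => (Real.exp_pos _).le

theorem one_add_mul_pathA_pos {α s : ℝ} (hα : 0 ≤ α) (hs : 0 ≤ s) :
    0 < 1 + α * pathA φ s := by
  have := mul_nonneg hα (pathA_nonneg (φ := φ) hs)
  linarith

theorem exp_two_mul_pathTalpha {α u : ℝ} (hu : 0 < 1 + α * pathA φ u) :
    Real.exp (2 * pathTalpha α φ u) = Real.exp (2 * φ u) / (1 + α * pathA φ u) ^ 2 := by
  rw [pathTalpha, mul_sub, Real.exp_sub, two_mul (Real.log _), Real.exp_add, Real.exp_log hu, sq]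

theorem pathA_pathTalpha (hφ : Continuous φ) {α s : ℝ} (hα : 0 ≤ α) (hs : 0 ≤ s) :
    pathA (pathTalpha α φ) s = pathA φ s / (1 + α * pathA φ s) := by
  have hpos : ∀ u ∈ Set.uIcc 0 s, 0 < 1 + α * pathA φ u := fun u hu =>
    one_add_mul_pathA_pos hα (Set.uIcc_of_le hs ▸ hu).1
  have hderiv : ∀ u ∈ Set.uIcc 0 s, HasDerivAt (fun t => pathA φ t / (1 + α * pathA φ t))
      (Real.exp (2 * pathTalpha α φ u)) u := fun u hu => by
    rw [exp_two_mul_pathTalpha (hpos u hu)]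
    exact (hasDerivAt_pathA hφ u).div_one_add_const_mul α (hpos u hu).ne'
  have hcont : ContinuousOn (fun u => Real.exp (2 * pathTalpha α φ u)) (Set.uIcc 0 s) := by
    have hT : ContinuousOn (pathTalpha α φ) (Set.uIcc 0 s) :=
      hφ.continuousOn.sub <|
        (continuous_const.add (continuous_const.mul (continuous_pathA hφ))).continuousOn.log
          fun u hu => (hpos u hu).ne'
    exact (continuousOn_const.mul hT).rexp
  rw [pathA, intervalIntegral.integral_eq_sub_of_hasDerivAt hderiv hcont.intervalIntegrable]
  simp [pathA]

end pathA

theorem stmt11 (φ : ℝ → ℝ) (hφ : Continuous φ)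
    (hAinf : Tendsto (fun s => pathA φ s) atTop atTop)
    (α : ℝ) (hα : 0 < α) :
    (∀ s, 0 ≤ s → pathA (pathTalpha α φ) s = pathA φ s / (1 + α * pathA φ s)) ∧
    Tendsto (fun s => pathA (pathTalpha α φ) s) atTop (nhds (1 / α)) := by
  have hA : ∀ s, 0 ≤ s → pathA (pathTalpha α φ) s = pathA φ s / (1 + α * pathA φ s) :=
    fun s hs => pathA_pathTalpha hφ hα.le hs
  refine ⟨hA, ((tendsto_div_one_add_const_mul_atTop hα).comp hAinf).congr' ?_⟩
  filter_upwards [eventually_ge_atTop (0 : ℝ)] with s hs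
  exact (hA s hs).symm
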